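/- arXiv:1908.08848 — 9 statements merged into one kernel-verified Lean document; each statement's English description precedes it below -/
import Mathlib

section
/- Let q be an odd prime, let ν generate the group of units (ZMod q)ˣ, and set c = !![1, 0; 1, 1] and d = !![1, 0; ν, 1] in SL₂(ZMod q). If 2 is a square in ZMod q, then c² is conjugate to c in SL₂(ZMod q) and d² is conjugate to d in SL₂(ZMod q). -/
theorem aux_conj_lower (q : ℕ) [Fact (Nat.Prime q)] (t r : ZMod q) (hr : r ≠ 0)
    (a b : Matrix.SpecialLinearGroup (Fin 2) (ZMod q))
    (ha : (a : Matrix (Fin 2) (Fin 2) (ZMod q)) = !![1, 0; r * r * t, 1])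
    (hb : (b : Matrix (Fin 2) (Fin 2) (ZMod q)) = !![1, 0; t, 1]) :
    IsConj a b := by
  have hdet : Matrix.det !![r, 0; 0, r⁻¹] = 1 := by
    simp [Matrix.det_fin_two_of, mul_inv_cancel₀ hr]
  let g : Matrix.SpecialLinearGroup (Fin 2) (ZMod q) := ⟨!![r, 0; 0, r⁻¹], hdet⟩
  rw [isConj_iff]
  refine ⟨g, ?_⟩
  rw [mul_inv_eq_iff_eq_mul]
  apply Subtype.ext
  show (g : Matrix (Fin 2) (Fin 2) (ZMod q)) * a = b * g
  rw [ha, hb]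
  show !![r, 0; 0, r⁻¹] * _ = _ * !![r, 0; 0, r⁻¹]
  have : r⁻¹ * (r * r * t) = t * r := by
    field_simp
  rw [Matrix.mul_fin_two, Matrix.mul_fin_two]
  simp [this]

theorem sq_conj_of_isSquare_two (q : ℕ) [Fact (Nat.Prime q)] (hq : Odd q)
    (ν : (ZMod q)ˣ) (hν : ∀ x : (ZMod q)ˣ, x ∈ Subgroup.zpowers ν)
    (c d : Matrix.SpecialLinearGroup (Fin 2) (ZMod q))
    (hc : (c : Matrix (Fin 2) (Fin 2) (ZMod q)) = !![1, 0; 1, 1])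
    (hd : (d : Matrix (Fin 2) (Fin 2) (ZMod q)) = !![1, 0; (ν : ZMod q), 1])
    (h2 : IsSquare (2 : ZMod q)) :
    IsConj (c ^ 2) c ∧ IsConj (d ^ 2) d := by
  obtain ⟨r, hr2⟩ := h2
  have h2ne : (2 : ZMod q) ≠ 0 := by
    have hnd : ¬ (q ∣ 2) := by
      intro h
      have hq2 : q = 2 :=
        (Nat.prime_dvd_prime_iff_eq (Fact.out : Nat.Prime q) Nat.prime_two).mp h
      rw [hq2] at hq; exact (by norm_num : ¬ Odd 2) hq
    intro h
    exact hnd ((ZMod.natCast_eq_zero_iff 2 q).mp (by exact_mod_cast h))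
  have hrne : r ≠ 0 := by
    intro h; apply h2ne; rw [hr2, h, mul_zero]
  constructor
  · refine aux_conj_lower q 1 r hrne _ _ ?_ hc
    rw [pow_two]
    show (c : Matrix (Fin 2) (Fin 2) (ZMod q)) * c = _
    rw [hc, Matrix.mul_fin_two]
    rw [← hr2]; ring_nf
  · refine aux_conj_lower q (ν : ZMod q) r hrne _ _ ?_ hd
    rw [pow_two]
    show (d : Matrix (Fin 2) (Fin 2) (ZMod q)) * d = _
    rw [hd, Matrix.mul_fin_two]
    rw [← hr2]; ring_nf
end

section
/- Let q be an odd prime, let ν generate the group of units (ZMod q)ˣ, and set c = !![1, 0; 1, 1] and d = !![1, 0; ν, 1] in SL₂(ZMod q). If 2 is not a square in ZMod q, then c² is conjugate to d in SL₂(ZMod q) and d² is conjugate to c in SL₂(ZMod q). -/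
/-!
Conjugating `!![1, 0; a, 1]` by `diag(t, t⁻¹)` gives `!![1, 0; a / t ^ 2, 1]`, so two lower
unitriangular matrices are conjugate in `SL₂` as soon as their corner entries differ by a nonzero
square factor. Here `c ^ 2`, `d`, `d ^ 2`, `c` have corner entries `2`, `ν`, `2ν`, `1`; as `ν`
generates the cyclic group `(ZMod q)ˣ`, the non-square `2` is `ν` times a square, so both `2 / ν`
and `2ν` are squares.
-/

open MatrixGroups

theorem Subgroup.exists_eq_mul_sq_of_mem_zpowers_of_not_isSquare {G : Type*} [CommGroup G]
    {ν x : G} (hx : x ∈ zpowers ν) (hsq : ¬IsSquare x) : ∃ s, x = ν * s ^ 2 := by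
  obtain ⟨k, rfl⟩ := hx
  obtain ⟨m, rfl | rfl⟩ := k.even_or_odd'
  · exact absurd ((even_two_mul m).isSquare_zpow ν) hsq
  · exact ⟨ν ^ m, by group⟩

namespace Matrix.SpecialLinearGroup

theorem coe_sq_of_coe_eq_lower {R : Type*} [CommRing R] {A : SL(2, R)} {a : R}
    (hA : (A : Matrix (Fin 2) (Fin 2) R) = !![1, 0; a, 1]) :
    ((A ^ 2 : SL(2, R)) : Matrix (Fin 2) (Fin 2) R) = !![1, 0; 2 * a, 1] := by
  rw [coe_pow, hA, sq, mul_fin_two]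
  simp only [mul_one, mul_zero, zero_mul, add_zero, zero_add, one_mul, two_mul]

theorem isConj_of_coe_eq_lower {F : Type*} [Field F] {A B : SL(2, F)} {a b t : F}
    (hA : (A : Matrix (Fin 2) (Fin 2) F) = !![1, 0; a, 1])
    (hB : (B : Matrix (Fin 2) (Fin 2) F) = !![1, 0; b, 1]) (ht : t ≠ 0) (h : a = b * t ^ 2) :
    IsConj A B := by
  refine isConj_iff.mpr ⟨diag2 t ht, mul_inv_eq_iff_eq_mul.mpr (Subtype.ext ?_)⟩
  rw [coe_mul, coe_mul, diag2_coe', hA, hB, mul_fin_two, mul_fin_two, h]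
  simp only [mul_one, mul_zero, add_zero, zero_add, one_mul, zero_mul]
  field_simp

end Matrix.SpecialLinearGroup

open Matrix.SpecialLinearGroup in
theorem sq_conj_of_not_isSquare_two_general (q : ℕ) [Fact (Nat.Prime q)]
    (ν : (ZMod q)ˣ) (hν : ∀ x : (ZMod q)ˣ, x ∈ Subgroup.zpowers ν)
    (c d : Matrix.SpecialLinearGroup (Fin 2) (ZMod q))
    (hc : (c : Matrix (Fin 2) (Fin 2) (ZMod q)) = !![1, 0; 1, 1])
    (hd : (d : Matrix (Fin 2) (Fin 2) (ZMod q)) = !![1, 0; (ν : ZMod q), 1])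
    (h2 : ¬ IsSquare (2 : ZMod q)) :
    IsConj (c ^ 2) d ∧ IsConj (d ^ 2) c := by
  have h2_ne : (2 : ZMod q) ≠ 0 := fun h ↦ h2 (h ▸ IsSquare.zero)
  have h2_unit : ¬IsSquare (Units.mk0 2 h2_ne) := fun h ↦ h2 (h.map (Units.coeHom _))
  obtain ⟨s, hs⟩ :=
    Subgroup.exists_eq_mul_sq_of_mem_zpowers_of_not_isSquare (hν (Units.mk0 2 h2_ne)) h2_unit
  replace hs : (2 : ZMod q) = ν * s ^ 2 := by simpa using congrArg Units.val hs
  constructor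
  · exact isConj_of_coe_eq_lower (coe_sq_of_coe_eq_lower hc) hd s.ne_zero (by rw [mul_one, hs])
  · exact isConj_of_coe_eq_lower (coe_sq_of_coe_eq_lower hd) hc (mul_ne_zero ν.ne_zero s.ne_zero)
      (by rw [hs]; ring)

theorem sq_conj_of_not_isSquare_two (q : ℕ) [Fact (Nat.Prime q)] (hq : Odd q)
    (ν : (ZMod q)ˣ) (hν : ∀ x : (ZMod q)ˣ, x ∈ Subgroup.zpowers ν)
    (c d : Matrix.SpecialLinearGroup (Fin 2) (ZMod q))
    (hc : (c : Matrix (Fin 2) (Fin 2) (ZMod q)) = !![1, 0; 1, 1])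
    (hd : (d : Matrix (Fin 2) (Fin 2) (ZMod q)) = !![1, 0; (ν : ZMod q), 1])
    (h2 : ¬ IsSquare (2 : ZMod q)) :
    IsConj (c ^ 2) d ∧ IsConj (d ^ 2) c :=
  sq_conj_of_not_isSquare_two_general q ν hν c d hc hd h2
end

section
/- Let q be an odd prime, let ν generate the group of units (ZMod q)ˣ, and set c = !![1, 0; 1, 1] and d = !![1, 0; ν, 1] in SL₂(ZMod q). Then c is conjugate to c⁻¹ in SL₂(ZMod q) if and only if q ≡ 1 (mod 4), and likewise d is conjugate to d⁻¹ in SL₂(ZMod q) if and only if q ≡ 1 (mod 4). -/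
open Matrix Matrix.SpecialLinearGroup in
lemma conj_inv_aux (q : ℕ) [Fact (Nat.Prime q)] (hq : Odd q) (a : ZMod q) (ha : a ≠ 0)
    (m : Matrix.SpecialLinearGroup (Fin 2) (ZMod q))
    (hm : (m : Matrix (Fin 2) (Fin 2) (ZMod q)) = !![1, 0; a, 1]) :
    IsConj m m⁻¹ ↔ q % 4 = 1 := by
  have hq3 : q % 4 ≠ 3 ↔ q % 4 = 1 := by
    have h2 : q % 2 = 1 := Nat.odd_iff.mp hq
    omega
  have hinv : ((m⁻¹ : Matrix.SpecialLinearGroup (Fin 2) (ZMod q)) : Matrix (Fin 2) (Fin 2) (ZMod q))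
      = !![1, 0; -a, 1] := by
    rw [Matrix.SpecialLinearGroup.coe_inv, hm, Matrix.adjugate_fin_two]
    simp
  constructor
  · rintro hconj
    rw [isConj_iff] at hconj
    obtain ⟨g, hg⟩ := hconj
    have h : ((g : Matrix (Fin 2) (Fin 2) (ZMod q)) * m) = (m⁻¹ : _) * g := by
      have := mul_inv_eq_iff_eq_mul.mp hg
      exact_mod_cast congrArg (Subtype.val) this
    rw [hm, hinv] at h
    set A := (g : Matrix (Fin 2) (Fin 2) (ZMod q)) with hA
    rw [Matrix.eta_fin_two A] at h
    rw [Matrix.mul_fin_two, Matrix.mul_fin_two] at h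
    have h00 := congrFun (congrFun h 0) 0
    have h10 := congrFun (congrFun h 1) 0
    simp at h00 h10
    have hdet : A.det = 1 := g.prop
    rw [Matrix.det_fin_two] at hdet
    have hβ : A 0 1 = 0 := h00.resolve_right ha
    have hδ : A 1 1 = -A 0 0 := by
      have hz : (A 1 1 + A 0 0) * a = 0 := by linear_combination h10
      rcases mul_eq_zero.mp hz with h' | h'
      · linear_combination h'
      · exact absurd h' ha
    have hsq : A 0 0 ^ 2 = -1 := by
      rw [hβ, hδ] at hdet
      linear_combination -hdet
    rw [← hq3]
    exact (ZMod.exists_sq_eq_neg_one_iff).mp ⟨A 0 0, by linear_combination -hsq⟩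
  · intro h4
    obtain ⟨x, hx⟩ := (ZMod.exists_sq_eq_neg_one_iff (p := q)).mpr (by omega)
    -- hx : -1 = x * x
    have hx0 : x ≠ 0 := by
      rintro rfl
      rw [mul_zero] at hx
      exact (neg_ne_zero.mpr one_ne_zero) hx
    have hxinv : x⁻¹ = -x := by
      field_simp
      linear_combination -hx
    have hdetg : (!![x, 0; 0, x⁻¹] : Matrix (Fin 2) (Fin 2) (ZMod q)).det = 1 := by
      rw [Matrix.det_fin_two]
      simp [mul_inv_cancel₀ hx0]
    set g : Matrix.SpecialLinearGroup (Fin 2) (ZMod q) := ⟨!![x, 0; 0, x⁻¹], hdetg⟩ with hg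
    rw [isConj_iff]
    refine ⟨g, ?_⟩
    rw [mul_inv_eq_iff_eq_mul]
    apply Subtype.ext
    show ((g : Matrix (Fin 2) (Fin 2) (ZMod q)) * m) = (m⁻¹ : _) * g
    rw [hm, hinv, hg]
    rw [Matrix.mul_fin_two, Matrix.mul_fin_two]
    ext i j
    fin_cases i <;> fin_cases j <;> simp [hxinv] <;> ring

theorem conj_inv_iff_one_mod_four (q : ℕ) [Fact (Nat.Prime q)] (hq : Odd q)
    (ν : (ZMod q)ˣ) (hν : ∀ x : (ZMod q)ˣ, x ∈ Subgroup.zpowers ν)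
    (c d : Matrix.SpecialLinearGroup (Fin 2) (ZMod q))
    (hc : (c : Matrix (Fin 2) (Fin 2) (ZMod q)) = !![1, 0; 1, 1])
    (hd : (d : Matrix (Fin 2) (Fin 2) (ZMod q)) = !![1, 0; (ν : ZMod q), 1]) :
    (IsConj c c⁻¹ ↔ q % 4 = 1) ∧ (IsConj d d⁻¹ ↔ q % 4 = 1) := by
  exact ⟨conj_inv_aux q hq 1 one_ne_zero c hc, conj_inv_aux q hq ν (ν.ne_zero) d hd⟩
end

section
/- Let q be an odd prime with q ≡ 3 (mod 4), let ν generate the group of units (ZMod q)ˣ, and set c = !![1, 0; 1, 1] and d = !![1, 0; ν, 1] in SL₂(ZMod q). Then c⁻¹ is conjugate to d in SL₂(ZMod q) and d⁻¹ is conjugate to c in SL₂(ZMod q). -/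
/-!
Since `q ≡ 3 (mod 4)`, `-1` is not a square in `ZMod q`; it is an odd power of the generator `ν`,
so `-ν` is an even power of `ν`, say `-ν = t²`. Conjugation by `diag(t⁻¹, t)` multiplies the
lower-left entry of a lower unitriangular matrix by `t²`, which turns `c⁻¹` (entry `-1`) into `d`
(entry `ν`) and `c` (entry `1`) into `d⁻¹` (entry `-ν`).
-/

theorem isSquare_mul_of_not_isSquare_of_mem_zpowers {G : Type*} [Group G] {g a : G}
    (ha : a ∈ Subgroup.zpowers g) (hsq : ¬IsSquare a) : IsSquare (a * g) := by
  obtain ⟨k, rfl⟩ := Subgroup.mem_zpowers_iff.mp ha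
  rcases Int.even_or_odd k with hk | hk
  · exact absurd (hk.isSquare_zpow g) hsq
  · rw [← zpow_add_one]
    exact hk.add_one.isSquare_zpow g

theorem ZMod.exists_unit_mul_self_eq_neg_of_forall_mem_zpowers {q : ℕ} [Fact q.Prime]
    (hq4 : q % 4 = 3) {ν : (ZMod q)ˣ} (hν : ∀ x : (ZMod q)ˣ, x ∈ Subgroup.zpowers ν) :
    ∃ t : (ZMod q)ˣ, (t * t : ZMod q) = -ν := by
  have hneg : ¬IsSquare (-1 : (ZMod q)ˣ) := fun h ↦
    ZMod.exists_sq_eq_neg_one_iff.mp (by simpa using h.map (Units.coeHom (ZMod q))) hq4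
  obtain ⟨t, ht⟩ := isSquare_mul_of_not_isSquare_of_mem_zpowers (hν _) hneg
  exact ⟨t, by simpa using congr_arg Units.val ht.symm⟩

namespace Matrix.SpecialLinearGroup

section Field

variable {ι F : Type*} [Fintype ι] [DecidableEq ι] [Field F]

theorem diag2n_mul_transvection {i j : ι} (hij : i ≠ j) {a : F} (ha : a ≠ 0) (b : F) :
    diag2n hij a ha * transvection hij b = transvection hij (a * a * b) * diag2n hij a ha := by
  ext k l
  simp only [coe_mul, diag2n_coe, transvection_coe, mul_add, add_mul, add_apply, diagonal_mul,
    mul_diagonal, single_apply, one_apply]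
  split_ifs <;> grind

theorem isConj_transvection_mul_self_mul {i j : ι} (hij : i ≠ j) {a : F} (ha : a ≠ 0) (b : F) :
    IsConj (transvection hij b) (transvection hij (a * a * b)) :=
  isConj_iff.mpr ⟨diag2n hij a ha, by rw [diag2n_mul_transvection, mul_inv_cancel_right]⟩

end Field

theorem eq_transvection_one_zero {R : Type*} [CommRing R] {g : SpecialLinearGroup (Fin 2) R} {b : R}
    (hg : (g : Matrix (Fin 2) (Fin 2) R) = !![1, 0; b, 1]) :
    g = transvection (one_ne_zero : (1 : Fin 2) ≠ 0) b := by
  ext i j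
  rw [hg]
  fin_cases i <;> fin_cases j <;> simp [transvection_coe]

end Matrix.SpecialLinearGroup

open Matrix.SpecialLinearGroup

theorem inv_conj_of_three_mod_four_general (q : ℕ) [Fact (Nat.Prime q)]
    (hq4 : q % 4 = 3)
    (ν : (ZMod q)ˣ) (hν : ∀ x : (ZMod q)ˣ, x ∈ Subgroup.zpowers ν)
    (c d : Matrix.SpecialLinearGroup (Fin 2) (ZMod q))
    (hc : (c : Matrix (Fin 2) (Fin 2) (ZMod q)) = !![1, 0; 1, 1])
    (hd : (d : Matrix (Fin 2) (Fin 2) (ZMod q)) = !![1, 0; (ν : ZMod q), 1]) :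
    IsConj c⁻¹ d ∧ IsConj d⁻¹ c := by
  obtain ⟨t, ht⟩ := ZMod.exists_unit_mul_self_eq_neg_of_forall_mem_zpowers hq4 hν
  have h10 : (1 : Fin 2) ≠ 0 := one_ne_zero
  rw [eq_transvection_one_zero hc, eq_transvection_one_zero hd, transvection_inv, transvection_inv]
  constructor
  · rw [show (ν : ZMod q) = t * t * -1 by linear_combination ht]
    exact isConj_transvection_mul_self_mul h10 t.ne_zero (-1)
  · rw [← ht, ← mul_one (t * t : ZMod q)]
    exact (isConj_transvection_mul_self_mul h10 t.ne_zero 1).symm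

theorem inv_conj_of_three_mod_four (q : ℕ) [Fact (Nat.Prime q)] (hq : Odd q)
    (hq4 : q % 4 = 3)
    (ν : (ZMod q)ˣ) (hν : ∀ x : (ZMod q)ˣ, x ∈ Subgroup.zpowers ν)
    (c d : Matrix.SpecialLinearGroup (Fin 2) (ZMod q))
    (hc : (c : Matrix (Fin 2) (Fin 2) (ZMod q)) = !![1, 0; 1, 1])
    (hd : (d : Matrix (Fin 2) (Fin 2) (ZMod q)) = !![1, 0; (ν : ZMod q), 1]) :
    IsConj c⁻¹ d ∧ IsConj d⁻¹ c :=
  inv_conj_of_three_mod_four_general q hq4 ν hν c d hc hd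
end

section
/- Let q be an odd prime, let ν generate the group of units (ZMod q)ˣ, and set zc = -!![1, 0; 1, 1] and zd = -!![1, 0; ν, 1] in SL₂(ZMod q). Then zc is conjugate to (zc)⁻¹ in SL₂(ZMod q) if and only if q ≡ 1 (mod 4), and likewise zd is conjugate to (zd)⁻¹ in SL₂(ZMod q) if and only if q ≡ 1 (mod 4). -/
/-!
Write `z = -(1 + a E₂₁)` with `a ≠ 0`, so `z⁻¹ = -(1 - a E₂₁)`. A matrix `c` with
`c (1 + a E₂₁) = (1 - a E₂₁) c` must have `c₀₁ = 0` and `c₁₁ = -c₀₀`, so `det c = -c₀₀²`;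
conversely `diag(i, -i)` with `i² = -1` does the job. Hence `z ~ z⁻¹` in `SL₂` exactly when `-1`
is a square, which in `ZMod q` means `q ≡ 1 (mod 4)`.
-/

open Matrix
open scoped MatrixGroups

namespace Matrix.SpecialLinearGroup

variable {R : Type*} [CommRing R]

lemma coe_inv_of_coe_eq_neg_lower {z : SL(2, R)} {a : R}
    (hz : (z : Matrix (Fin 2) (Fin 2) R) = -!![1, 0; a, 1]) :
    ((z⁻¹ : SL(2, R)) : Matrix (Fin 2) (Fin 2) R) = -!![1, 0; -a, 1] := by
  rw [coe_inv, hz, adjugate_fin_two]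
  ext i j
  fin_cases i <;> fin_cases j <;> simp

lemma isSquare_neg_one_of_mul_lower_eq [NoZeroDivisors R] {a : R} (ha : a ≠ 0) (c : SL(2, R))
    (hc : (c : Matrix (Fin 2) (Fin 2) R) * !![1, 0; a, 1] = !![1, 0; -a, 1] * c) :
    IsSquare (-1 : R) := by
  have h00 := congrFun (congrFun hc 0) 0
  have h10 := congrFun (congrFun hc 1) 0
  simp only [mul_apply, Fin.sum_univ_two, of_apply, cons_val', cons_val_zero, cons_val_one,
    empty_val', cons_val_fin_one] at h00 h10
  have hdet := c.2
  rw [det_fin_two] at hdet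
  have hc01 : c 0 1 = 0 := by simpa [ha] using h00
  have hc11 : c 1 1 = -c 0 0 := by
    have : a * (c 1 1 + c 0 0) = 0 := by linear_combination h10
    linear_combination (mul_eq_zero.mp this).resolve_left ha
  exact ⟨c 0 0, by linear_combination hdet - c 0 0 * hc11 + c 1 0 * hc01⟩

lemma isConj_inv_iff_isSquare_neg_one [NoZeroDivisors R] {a : R} (ha : a ≠ 0) {z : SL(2, R)}
    (hz : (z : Matrix (Fin 2) (Fin 2) R) = -!![1, 0; a, 1]) :
    IsConj z z⁻¹ ↔ IsSquare (-1 : R) := by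
  have hconj : ∀ c : SL(2, R), c * z * c⁻¹ = z⁻¹ ↔
      (c : Matrix (Fin 2) (Fin 2) R) * !![1, 0; a, 1] = !![1, 0; -a, 1] * c := by
    intro c
    rw [mul_inv_eq_iff_eq_mul]
    refine Subtype.ext_iff.trans ?_
    rw [coe_mul, coe_mul, hz, coe_inv_of_coe_eq_neg_lower hz, mul_neg, neg_mul, neg_inj]
  rw [isConj_iff]
  simp only [hconj]
  refine ⟨fun ⟨c, hc⟩ ↦ isSquare_neg_one_of_mul_lower_eq ha c hc, fun ⟨i, hi⟩ ↦ ?_⟩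
  refine ⟨⟨!![i, 0; 0, -i], by simp [det_fin_two_of, ← hi]⟩, ?_⟩
  ext r s
  fin_cases r <;> fin_cases s <;> simp [mul_apply, Fin.sum_univ_two, mul_comm]

end Matrix.SpecialLinearGroup

theorem neg_conj_inv_iff_one_mod_four_general (q : ℕ) [Fact (Nat.Prime q)] (hq : Odd q)
    (ν : (ZMod q)ˣ)
    (zc zd : Matrix.SpecialLinearGroup (Fin 2) (ZMod q))
    (hzc : (zc : Matrix (Fin 2) (Fin 2) (ZMod q)) = -!![1, 0; 1, 1])
    (hzd : (zd : Matrix (Fin 2) (Fin 2) (ZMod q)) = -!![1, 0; (ν : ZMod q), 1]) :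
    (IsConj zc zc⁻¹ ↔ q % 4 = 1) ∧ (IsConj zd zd⁻¹ ↔ q % 4 = 1) := by
  have hsq : IsSquare (-1 : ZMod q) ↔ q % 4 = 1 := by
    have := Nat.odd_mod_four_iff.mp (Nat.odd_iff.mp hq)
    rw [ZMod.exists_sq_eq_neg_one_iff]
    omega
  rw [SpecialLinearGroup.isConj_inv_iff_isSquare_neg_one one_ne_zero hzc,
    SpecialLinearGroup.isConj_inv_iff_isSquare_neg_one ν.ne_zero hzd]
  exact ⟨hsq, hsq⟩

theorem neg_conj_inv_iff_one_mod_four (q : ℕ) [Fact (Nat.Prime q)] (hq : Odd q)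
    (ν : (ZMod q)ˣ) (hν : ∀ x : (ZMod q)ˣ, x ∈ Subgroup.zpowers ν)
    (zc zd : Matrix.SpecialLinearGroup (Fin 2) (ZMod q))
    (hzc : (zc : Matrix (Fin 2) (Fin 2) (ZMod q)) = -!![1, 0; 1, 1])
    (hzd : (zd : Matrix (Fin 2) (Fin 2) (ZMod q)) = -!![1, 0; (ν : ZMod q), 1]) :
    (IsConj zc zc⁻¹ ↔ q % 4 = 1) ∧ (IsConj zd zd⁻¹ ↔ q % 4 = 1) :=
  neg_conj_inv_iff_one_mod_four_general q hq ν zc zd hzc hzd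
end

section
/- Let q be an odd prime with q ≡ 1 (mod 4). Then every element g of SL₂(ZMod q) is conjugate to its inverse g⁻¹ in SL₂(ZMod q). -/
/-!
For traceless `w`, the polarized Cayley–Hamilton identity `w g + g w = tr g • w + tr (w g) • 1`
shows that `w g = (tr g • 1 - g) w = adj g * w` once `tr (w g) = 0`; in `SL₂` we have
`adj g = g⁻¹`, so such a `w` of determinant one conjugates `g` to `g⁻¹`. Writing
`w = !![x, y; z, -x]`, this asks for a solution of one linear equation in `x, y, z` with
`x² + y z = -1`, and a square root of `-1` (which exists in `ZMod q` for `q ≡ 1 mod 4`) gives one.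
-/

namespace Matrix

theorem mul_eq_adjugate_mul_of_trace_eq_zero {R : Type*} [CommRing R]
    {w g : Matrix (Fin 2) (Fin 2) R} (hw : w.trace = 0) (hwg : (w * g).trace = 0) :
    w * g = g.adjugate * w := by
  rw [trace_fin_two] at hw hwg
  simp only [mul_apply, Fin.sum_univ_two] at hwg
  rw [adjugate_fin_two]
  ext i j
  fin_cases i <;> fin_cases j <;>
    simp only [Fin.zero_eta, Fin.mk_one, Fin.isValue, mul_apply, Fin.sum_univ_two, of_apply,
      cons_val', cons_val_fin_one, cons_val_zero, cons_val_one, neg_mul]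
  · linear_combination hwg - g 1 1 * hw
  · linear_combination g 0 1 * hw
  · linear_combination g 1 0 * hw
  · linear_combination hwg - g 0 0 * hw

theorem exists_det_eq_one_trace_eq_zero_trace_mul_eq_zero {K : Type*} [Field K]
    (h : IsSquare (-1 : K)) (g : Matrix (Fin 2) (Fin 2) K) :
    ∃ w : Matrix (Fin 2) (Fin 2) K, w.det = 1 ∧ w.trace = 0 ∧ (w * g).trace = 0 := by
  obtain ⟨i, hi⟩ := h
  suffices ∃ x y z : K, x * x + y * z = -1 ∧ (g 0 0 - g 1 1) * x + g 1 0 * y + g 0 1 * z = 0 by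
    obtain ⟨x, y, z, hdet, htr⟩ := this
    refine ⟨!![x, y; z, -x], ?_, ?_, ?_⟩
    · rw [det_fin_two_of]
      linear_combination -hdet
    · simp [trace_fin_two]
    · rw [eta_fin_two g, mul_fin_two, trace_fin_two_of]
      linear_combination htr
  by_cases hc : g 1 0 = 0
  · by_cases hb : g 0 1 = 0
    · exact ⟨0, 1, -1, by ring, by rw [hb, hc]; ring⟩
    · refine ⟨i, 0, -((g 0 0 - g 1 1) * i) / g 0 1, ?_, ?_⟩
      · linear_combination -hi
      · field_simp
        ring
  · refine ⟨i, -((g 0 0 - g 1 1) * i) / g 1 0, 0, ?_, ?_⟩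
    · linear_combination -hi
    · field_simp
      ring

namespace SpecialLinearGroup

theorem isConj_inv_of_isSquare_neg_one {K : Type*} [Field K] (h : IsSquare (-1 : K))
    (g : SpecialLinearGroup (Fin 2) K) : IsConj g g⁻¹ := by
  obtain ⟨w, hdet, hw, hwg⟩ := exists_det_eq_one_trace_eq_zero_trace_mul_eq_zero h g
  let W : SpecialLinearGroup (Fin 2) K := ⟨w, hdet⟩
  refine isConj_iff.2 ⟨W, mul_inv_eq_iff_eq_mul.2 (Subtype.ext ?_)⟩
  rw [coe_mul, coe_mul, coe_inv]
  exact mul_eq_adjugate_mul_of_trace_eq_zero hw hwg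

end SpecialLinearGroup

end Matrix

theorem all_real_of_one_mod_four_general (q : ℕ) [Fact (Nat.Prime q)]
    (hq4 : q % 4 = 1) (g : Matrix.SpecialLinearGroup (Fin 2) (ZMod q)) :
    IsConj g g⁻¹ :=
  Matrix.SpecialLinearGroup.isConj_inv_of_isSquare_neg_one
    (ZMod.exists_sq_eq_neg_one_iff.2 (by omega)) g

theorem all_real_of_one_mod_four (q : ℕ) [Fact (Nat.Prime q)] (hq : Odd q)
    (hq4 : q % 4 = 1) (g : Matrix.SpecialLinearGroup (Fin 2) (ZMod q)) :
    IsConj g g⁻¹ :=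
  all_real_of_one_mod_four_general q hq4 g
end

section
/- Let q be an odd prime with q ≡ 3 (mod 4), let ν generate the group of units (ZMod q)ˣ, and set c = !![1, 0; 1, 1] and d = !![1, 0; ν, 1] in SL₂(ZMod q). Then an element g of SL₂(ZMod q) is conjugate to its inverse g⁻¹ if and only if g is conjugate to none of c, d, -c, -d. -/
/-!
An element `g ∈ SL₂(F)` of a finite field of odd characteristic whose trace `t` satisfies
`t² ≠ 4` is conjugate to the companion matrix of `X² - t X + 1`: a conjugator with columns `v`
and `g v` has as determinant a binary quadratic form of discriminant `t² - 4`, and over such a field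
every nondegenerate binary form represents `1`. As `g⁻¹` has the same trace, `g` is conjugate to
`g⁻¹`. The remaining elements are `±1` and `±u` with `u ≠ 1` unipotent; `u` is conjugate to a
transvection `!![1, 0; m, 1]`, and conjugating by diagonal matrices multiplies `m` by squares, so
`m` can be taken to be `1` or `ν`. Finally, `!![1, 0; m, 1]` is conjugate to its inverse
`!![1, 0; -m, 1]` only if `-1` is a square, which fails when `q ≡ 3 (mod 4)`.
-/

open scoped MatrixGroups

theorem IsConj.inv {G : Type*} [Group G] {a b : G} (h : IsConj a b) : IsConj a⁻¹ b⁻¹ :=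
  let ⟨c, hc⟩ := h
  ⟨c, SemiconjBy.inv_right_iff.mpr hc⟩

theorem IsConj.neg {M : Type*} [Monoid M] [HasDistribNeg M] {a b : M} (h : IsConj a b) :
    IsConj (-a) (-b) :=
  let ⟨c, hc⟩ := h
  ⟨c, hc.neg_right⟩

theorem isConj_neg_inv_iff {G : Type*} [Group G] [HasDistribNeg G] {g : G} :
    IsConj (-g) (-g)⁻¹ ↔ IsConj g g⁻¹ := by
  rw [inv_neg]
  exact ⟨fun h ↦ by simpa using h.neg, IsConj.neg⟩

theorem exists_eq_sq_or_eq_mul_sq_of_mem_zpowers {G : Type*} [CommGroup G] {ν x : G}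
    (hx : x ∈ Subgroup.zpowers ν) : ∃ s, x = s ^ 2 ∨ x = ν * s ^ 2 := by
  obtain ⟨k, rfl⟩ := Subgroup.mem_zpowers_iff.mp hx
  obtain ⟨j, rfl | rfl⟩ := Int.even_or_odd' k
  · exact ⟨ν ^ j, Or.inl (by rw [sq, ← zpow_add, two_mul])⟩
  · exact ⟨ν ^ j, Or.inr (by rw [sq, ← zpow_add, ← two_mul, zpow_add_one, mul_comm])⟩

namespace FiniteField

variable {F : Type*} [Field F] [Fintype F]

open Polynomial in
theorem exists_mul_sq_add_mul_sq_eq (hF : ringChar F ≠ 2) {α γ : F} (hα : α ≠ 0) (hγ : γ ≠ 0)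
    (δ : F) : ∃ x y, α * x ^ 2 + γ * y ^ 2 = δ := by
  obtain ⟨x, y, hxy⟩ := exists_root_sum_quadratic
    (f := C α * X ^ 2 + C 0 * X + C (-δ)) (g := C γ * X ^ 2 + C 0 * X + C 0)
    (degree_quadratic hα) (degree_quadratic hγ) (odd_card_of_char_ne_two hF)
  refine ⟨x, y, ?_⟩
  simp only [eval_add, eval_mul, eval_pow, eval_C, eval_X] at hxy
  linear_combination hxy

theorem exists_binaryForm_eq_one (hF : ringChar F ≠ 2) {A B C : F}
    (hdisc : B ^ 2 - 4 * A * C ≠ 0) : ∃ x y, A * x ^ 2 + B * x * y + C * y ^ 2 = 1 := by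
  have h2 : (2 : F) ≠ 0 := Ring.two_ne_zero hF
  by_cases hA : A = 0
  · subst hA
    have hB : B ≠ 0 := by rintro rfl; simp at hdisc
    exact ⟨(1 - C) / B, 1, by field_simp; ring⟩
  -- completing the square: `4A (A x² + B x y + C y²) = (2 A x + B y)² - (B² - 4 A C) y²`
  obtain ⟨u, y, huy⟩ := exists_mul_sq_add_mul_sq_eq hF one_ne_zero (neg_ne_zero.mpr hdisc)
    (4 * A)
  set x := (u - B * y) / (2 * A)
  have hx : 2 * A * x = u - B * y := mul_div_cancel₀ _ (mul_ne_zero h2 hA)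
  have h4A : 4 * A ≠ 0 := by
    rw [show (4 : F) * A = 2 * (2 * A) by ring]
    exact mul_ne_zero h2 (mul_ne_zero h2 hA)
  refine ⟨x, y, mul_left_cancel₀ h4A ?_⟩
  linear_combination (2 * A * x + u + B * y) * hx + huy

end FiniteField

namespace Matrix.SpecialLinearGroup

theorem isConj_iff_exists_coe_mul_eq {n R : Type*} [Fintype n] [DecidableEq n] [CommRing R]
    {g h : SpecialLinearGroup n R} :
    IsConj g h ↔ ∃ P : SpecialLinearGroup n R, (P : Matrix n n R) * g = h * P :=
  ⟨fun ⟨P, hP⟩ ↦ ⟨P, congrArg Subtype.val hP⟩, fun ⟨P, hP⟩ ↦ ⟨toUnits P, Subtype.ext hP⟩⟩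

section CommRing

variable {R : Type*} [CommRing R]

theorem coe_transvection_one_zero (m : R) :
    (transvection one_ne_zero m : SL(2, R)) = !![1, 0; m, 1] := by
  ext i j
  fin_cases i <;> fin_cases j <;> simp [transvection_coe]

theorem trace_coe_inv (g : SL(2, R)) :
    trace (g⁻¹ : SL(2, R)).1 = trace g.1 := by
  rw [coe_inv, adjugate_fin_two, trace_fin_two, trace_fin_two]
  simp [add_comm]

def companion (t : R) : SL(2, R) :=
  ⟨!![0, -1; 1, t], by simp [det_fin_two_of]⟩

-- The conjugator has columns `v` and `g v` for `v = (x, y)`, and its determinant is the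
-- binary form in the hypothesis.
theorem isConj_companion_trace_of_binaryForm_eq_one (g : SL(2, R)) {x y : R}
    (h : g 1 0 * x ^ 2 + (g 1 1 - g 0 0) * x * y - g 0 1 * y ^ 2 = 1) :
    IsConj (companion (trace g.1)) g := by
  induction g using fin_two_induction with
  | h a b c e hdet =>
  simp only [of_apply, cons_val', cons_val_zero, cons_val_one, cons_val_fin_one,
    empty_val'] at h
  refine isConj_iff_exists_coe_mul_eq.mpr
    ⟨⟨!![x, a * x + b * y; y, c * x + e * y], by rw [det_fin_two_of]; linear_combination h⟩, ?_⟩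
  simp only [companion, coe_mk, trace_fin_two_of, mul_fin_two]
  ext i j
  fin_cases i <;> fin_cases j <;>
    simp only [Fin.zero_eta, Fin.mk_one, of_apply, cons_val', cons_val_zero, cons_val_one,
      cons_val_fin_one] <;>
    first
      | ring1
      | linear_combination x * hdet
      | linear_combination y * hdet

theorem not_isConj_transvection_inv [NoZeroDivisors R] (hR : ¬IsSquare (-1 : R)) {m : R}
    (hm : m ≠ 0) :
    ¬IsConj (transvection one_ne_zero m : SL(2, R)) (transvection one_ne_zero m)⁻¹ := by
  rw [transvection_inv, isConj_iff_exists_coe_mul_eq]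
  rintro ⟨P, hP⟩
  induction P using fin_two_induction with
  | h p r s w hdet =>
  rw [coe_transvection_one_zero, coe_transvection_one_zero, coe_mk, mul_fin_two,
    mul_fin_two] at hP
  have h00 := congrFun (congrFun hP 0) 0
  have h10 := congrFun (congrFun hP 1) 0
  simp only [of_apply, cons_val', cons_val_zero, cons_val_one, cons_val_fin_one, empty_val']
    at h00 h10
  have hr : r = 0 := (mul_eq_zero.mp (by linear_combination h00 : r * m = 0)).resolve_right hm
  have hw : w = -p := eq_neg_of_add_eq_zero_left
    ((mul_eq_zero.mp (by linear_combination h10 : (w + p) * m = 0)).resolve_right hm)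
  exact hR ⟨p, by rw [hr, hw] at hdet; linear_combination hdet⟩

end CommRing

section Field

variable {F : Type*} [Field F]

theorem isConj_companion_trace [Fintype F] (hF : ringChar F ≠ 2) (g : SL(2, F))
    (htr : trace g.1 ^ 2 ≠ 4) : IsConj (companion (trace g.1)) g := by
  have hdet := g.det_coe
  rw [det_fin_two] at hdet
  rw [trace_fin_two] at htr
  obtain ⟨x, y, hxy⟩ := FiniteField.exists_binaryForm_eq_one hF
    (A := g 1 0) (B := g 1 1 - g 0 0) (C := -g 0 1)
    (fun h ↦ htr (by linear_combination h + 4 * hdet))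
  exact isConj_companion_trace_of_binaryForm_eq_one g (x := x) (y := y) (by linear_combination hxy)

theorem isConj_inv_self_of_trace_sq_ne_four [Fintype F] (hF : ringChar F ≠ 2) (g : SL(2, F))
    (htr : trace g.1 ^ 2 ≠ 4) : IsConj g g⁻¹ := by
  have hinv := isConj_companion_trace hF g⁻¹ (by rwa [trace_coe_inv])
  rw [trace_coe_inv] at hinv
  exact (isConj_companion_trace hF g htr).symm.trans hinv

theorem exists_isConj_transvection_of_trace_eq_two {g : SL(2, F)} (htr : trace g.1 = 2)
    (hg : g ≠ 1) : ∃ m ≠ 0, IsConj (transvection one_ne_zero m) g := by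
  induction g using fin_two_induction with
  | h a b c e hdet =>
  rw [coe_mk, trace_fin_two_of] at htr
  by_cases hb : b = 0
  · subst hb
    have ha : a = 1 := by
      have : (a - 1) ^ 2 = 0 := by linear_combination a * htr - hdet
      exact sub_eq_zero.mp (pow_eq_zero_iff two_ne_zero |>.mp this)
    obtain rfl : e = 1 := by linear_combination htr - ha
    subst ha
    have hc : c ≠ 0 := by
      rintro rfl
      exact hg (Subtype.ext (by simp [one_fin_two]))
    exact ⟨c, hc, isConj_iff_exists_coe_mul_eq.mpr ⟨1, by simp [coe_transvection_one_zero]⟩⟩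
  · refine ⟨-b⁻¹, by simpa using hb, isConj_iff_exists_coe_mul_eq.mpr
      ⟨⟨!![0, b; -b⁻¹, 1 - a], by rw [det_fin_two_of]; field_simp; ring⟩, ?_⟩⟩
    rw [coe_transvection_one_zero, coe_mk, coe_mk, mul_fin_two, mul_fin_two]
    ext i j
    fin_cases i <;> fin_cases j <;>
    simp only [Fin.zero_eta, Fin.mk_one, of_apply, cons_val', cons_val_zero, cons_val_one,
      cons_val_fin_one] <;>
      first
        | ring1
        | linear_combination b⁻¹ * htr
        | linear_combination hdet - htr

theorem isConj_transvection_mul_sq (m : F) {u : F} (hu : u ≠ 0) :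
    IsConj (transvection one_ne_zero m : SL(2, F)) (transvection one_ne_zero (m * u ^ 2)) := by
  refine isConj_iff_exists_coe_mul_eq.mpr ⟨diag2 u⁻¹ (inv_ne_zero hu), ?_⟩
  rw [diag2_coe', coe_transvection_one_zero, coe_transvection_one_zero, mul_fin_two, mul_fin_two]
  ext i j
  fin_cases i <;> fin_cases j <;>
    simp only [Fin.zero_eta, Fin.mk_one, of_apply, cons_val', cons_val_zero, cons_val_one,
      cons_val_fin_one] <;> field_simp <;> ring

theorem isConj_transvection_one_or_generator {ν : Fˣ} (hν : ∀ x : Fˣ, x ∈ Subgroup.zpowers ν)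
    {m : F} (hm : m ≠ 0) :
    IsConj (transvection one_ne_zero m : SL(2, F)) (transvection one_ne_zero 1) ∨
      IsConj (transvection one_ne_zero m : SL(2, F)) (transvection one_ne_zero (ν : F)) := by
  obtain ⟨s, hs | hs⟩ := exists_eq_sq_or_eq_mul_sq_of_mem_zpowers (hν (Units.mk0 m hm))
  · have hms : m = 1 * (s : F) ^ 2 := by simpa using congrArg Units.val hs
    exact .inl (hms ▸ (isConj_transvection_mul_sq 1 s.ne_zero).symm)
  · have hms : m = ν * (s : F) ^ 2 := by simpa using congrArg Units.val hs
    exact .inr (hms ▸ (isConj_transvection_mul_sq (ν : F) s.ne_zero).symm)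

theorem isConj_inv_self_or_exists_isConj_transvection [Fintype F] (hF : ringChar F ≠ 2)
    (g : SL(2, F)) :
    IsConj g g⁻¹ ∨ ∃ m ≠ 0, IsConj g (transvection one_ne_zero m) ∨
      IsConj g (-transvection one_ne_zero m) := by
  by_cases htr : trace g.1 ^ 2 = 4
  swap
  · exact .inl (isConj_inv_self_of_trace_sq_ne_four hF g htr)
  rcases mul_eq_zero.mp (by linear_combination htr : (trace g.1 - 2) * (trace g.1 + 2) = 0)
    with htr | htr
  · by_cases hg : g = 1
    · simp [hg]
    obtain ⟨m, hm, hconj⟩ := exists_isConj_transvection_of_trace_eq_two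
      (by linear_combination htr) hg
    exact .inr ⟨m, hm, .inl hconj.symm⟩
  · by_cases hg : g = -1
    · rw [hg, isConj_neg_inv_iff, inv_one]
      exact .inl (.refl 1)
    have hneg : trace (-g).1 = 2 := by
      rw [coe_neg, trace_neg]
      linear_combination -htr
    obtain ⟨m, hm, hconj⟩ := exists_isConj_transvection_of_trace_eq_two hneg
      (fun h ↦ hg (by rw [← h, neg_neg]))
    exact .inr ⟨m, hm, .inr (by simpa using hconj.symm.neg)⟩

end Field

end Matrix.SpecialLinearGroup

open Matrix.SpecialLinearGroup in
theorem real_iff_not_conj_cd_general (q : ℕ) [Fact (Nat.Prime q)]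
    (hq4 : q % 4 = 3)
    (ν : (ZMod q)ˣ) (hν : ∀ x : (ZMod q)ˣ, x ∈ Subgroup.zpowers ν)
    (c d : Matrix.SpecialLinearGroup (Fin 2) (ZMod q))
    (hc : (c : Matrix (Fin 2) (Fin 2) (ZMod q)) = !![1, 0; 1, 1])
    (hd : (d : Matrix (Fin 2) (Fin 2) (ZMod q)) = !![1, 0; (ν : ZMod q), 1])
    (g : Matrix.SpecialLinearGroup (Fin 2) (ZMod q)) :
    IsConj g g⁻¹ ↔ ¬ IsConj g c ∧ ¬ IsConj g d ∧ ¬ IsConj g (-c) ∧ ¬ IsConj g (-d) := by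
  obtain rfl : c = transvection one_ne_zero 1 :=
    Subtype.ext (hc.trans (coe_transvection_one_zero 1).symm)
  obtain rfl : d = transvection one_ne_zero (ν : ZMod q) :=
    Subtype.ext (hd.trans (coe_transvection_one_zero _).symm)
  have hchar : ringChar (ZMod q) ≠ 2 := by rw [ZMod.ringChar_zmod_n]; omega
  have hsq : ¬IsSquare (-1 : ZMod q) := by rw [ZMod.exists_sq_eq_neg_one_iff]; omega
  constructor
  · intro hg
    have hnot {m : ZMod q} (hm : m ≠ 0) : ¬IsConj g (transvection one_ne_zero m) ∧
        ¬IsConj g (-transvection one_ne_zero m) :=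
      ⟨fun h ↦ not_isConj_transvection_inv hsq hm ((h.symm.trans hg).trans h.inv),
        fun h ↦ not_isConj_transvection_inv hsq hm
          (isConj_neg_inv_iff.mp ((h.symm.trans hg).trans h.inv))⟩
    exact ⟨(hnot one_ne_zero).1, (hnot ν.ne_zero).1, (hnot one_ne_zero).2, (hnot ν.ne_zero).2⟩
  · rintro ⟨hgc, hgd, hgnc, hgnd⟩
    rcases isConj_inv_self_or_exists_isConj_transvection hchar g with hg | ⟨m, hm, hgm | hgm⟩
    · exact hg
    · rcases isConj_transvection_one_or_generator hν hm with h | h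
      exacts [(hgc (hgm.trans h)).elim, (hgd (hgm.trans h)).elim]
    · rcases isConj_transvection_one_or_generator hν hm with h | h
      exacts [(hgnc (hgm.trans h.neg)).elim, (hgnd (hgm.trans h.neg)).elim]

theorem real_iff_not_conj_cd (q : ℕ) [Fact (Nat.Prime q)] (hq : Odd q)
    (hq4 : q % 4 = 3)
    (ν : (ZMod q)ˣ) (hν : ∀ x : (ZMod q)ˣ, x ∈ Subgroup.zpowers ν)
    (c d : Matrix.SpecialLinearGroup (Fin 2) (ZMod q))
    (hc : (c : Matrix (Fin 2) (Fin 2) (ZMod q)) = !![1, 0; 1, 1])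
    (hd : (d : Matrix (Fin 2) (Fin 2) (ZMod q)) = !![1, 0; (ν : ZMod q), 1])
    (g : Matrix.SpecialLinearGroup (Fin 2) (ZMod q)) :
    IsConj g g⁻¹ ↔ ¬ IsConj g c ∧ ¬ IsConj g d ∧ ¬ IsConj g (-c) ∧ ¬ IsConj g (-d) :=
  real_iff_not_conj_cd_general q hq4 ν hν c d hc hd g
end

section
/- Let q be an odd prime and let g be an element of SL₂(ZMod q) whose order divides q + 1. Then g is conjugate to its inverse g⁻¹ in SL₂(ZMod q). -/
/-!
Since `g + g⁻¹ = (tr g) • 1` in `SL₂`, a matrix `S` conjugates `g` to `g⁻¹` as soon as it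
anticommutes with the traceless part of `g`. Among traceless `S = !![x, y; z, -x]` this is a
single linear condition on `(x, y, z)`, and on that plane `det S` restricts to a binary quadratic
form whose discriminant is `tr(g)² - 4`. When `tr g ≠ ±2` the form is nondegenerate, hence
universal over a finite field of odd characteristic, so some such `S` has determinant `1`.

When `tr g = ±2`, `±g` is unipotent, so `(±g)^q = 1`; together with `g^(q+1) = 1` (and `q + 1`
even) this forces `g = ±1`, which is its own inverse.
-/

open Matrix Polynomial
open scoped MatrixGroups

theorem pow_char_eq_one_of_sub_one_sq_eq_zero {A : Type*} [Ring A] (p : ℕ) [Fact p.Prime]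
    [CharP A p] {x : A} (h : (x - 1) ^ 2 = 0) : x ^ p = 1 := by
  have hp : 2 ≤ p := (Fact.out : p.Prime).two_le
  calc x ^ p = (1 + (x - 1)) ^ p := by rw [add_sub_cancel]
    _ = 1 + (x - 1) ^ 2 * (x - 1) ^ (p - 2) := by
      rw [add_pow_char_of_commute p (Commute.one_left _), one_pow, ← pow_add,
        Nat.add_sub_cancel' hp]
    _ = 1 := by rw [h, zero_mul, add_zero]

theorem FiniteField.exists_sq_sub_mul_sq_eq {F : Type*} [Field F] [Fintype F]
    (hF : ringChar F ≠ 2) {D : F} (hD : D ≠ 0) (c : F) : ∃ u v : F, u ^ 2 - D * v ^ 2 = c := by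
  obtain ⟨u, v, huv⟩ := exists_root_sum_quadratic
    (degree_X_pow_sub_C two_pos c) (degree_C_mul_X_pow 2 (neg_ne_zero.mpr hD))
    (odd_card_of_char_ne_two hF)
  refine ⟨u, v, ?_⟩
  simp only [eval_sub, eval_pow, eval_X, eval_C, eval_mul] at huv
  linear_combination huv

section FiniteField

variable {F : Type*} [Field F] [Fintype F]

/-- `(x, y, z)` are the entries of a traceless matrix `!![x, y; z, -x]` of determinant `1`
satisfying the linear condition of `Matrix.traceless_mul_eq_adjugate_mul`. -/
theorem exists_traceless_of_ne_zero (hF : ringChar F ≠ 2) {e b c : F} (hb : b ≠ 0)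
    (hD : e ^ 2 + 4 * b * c ≠ 0) :
    ∃ x y z : F, e * x + c * y + b * z = 0 ∧ -x ^ 2 - y * z = 1 := by
  have h2 : (2 : F) ≠ 0 := Ring.two_ne_zero hF
  -- eliminating `z`, the condition becomes `(2 b x - e y)² - (e² + 4 b c) y² = -4 b²`
  obtain ⟨u, v, huv⟩ := FiniteField.exists_sq_sub_mul_sq_eq hF hD (-4 * b ^ 2)
  refine ⟨(u + e * v) / (2 * b), v, -(e * ((u + e * v) / (2 * b)) + c * v) / b, ?_, ?_⟩
  · field_simp
    ring
  · field_simp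
    linear_combination -huv

theorem exists_traceless (hF : ringChar F ≠ 2) {e b c : F} (hD : e ^ 2 + 4 * b * c ≠ 0) :
    ∃ x y z : F, e * x + c * y + b * z = 0 ∧ -x ^ 2 - y * z = 1 := by
  by_cases hb : b = 0
  · by_cases hc : c = 0
    · exact ⟨0, 1, -1, by simp [hb, hc], by ring⟩
    · obtain ⟨x, z, y, hlin, hdet⟩ :=
        exists_traceless_of_ne_zero hF (e := e) hc (by rwa [mul_right_comm])
      exact ⟨x, y, z, by linear_combination hlin, by linear_combination hdet⟩
  · exact exists_traceless_of_ne_zero hF hb hD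

end FiniteField

namespace Matrix

variable {R : Type*} [CommRing R]

theorem sq_fin_two (M : Matrix (Fin 2) (Fin 2) R) : M ^ 2 = M.trace • M - M.det • 1 := by
  ext i j
  fin_cases i <;> fin_cases j <;> simp [sq, mul_apply, trace_fin_two, det_fin_two] <;> ring

theorem traceless_mul_eq_adjugate_mul (M : Matrix (Fin 2) (Fin 2) R) {x y z : R}
    (h : (M 0 0 - M 1 1) * x + M 1 0 * y + M 0 1 * z = 0) :
    !![x, y; z, -x] * M = adjugate M * !![x, y; z, -x] := by
  rw [adjugate_fin_two]
  ext i j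
  fin_cases i <;> fin_cases j <;> simp [mul_apply]
  · linear_combination h
  · ring
  · ring
  · linear_combination h

namespace SpecialLinearGroup

theorem sub_one_sq_eq_zero_of_trace_eq_two (g : SL(2, R))
    (h : trace (g : Matrix (Fin 2) (Fin 2) R) = 2) :
    ((g : Matrix (Fin 2) (Fin 2) R) - 1) ^ 2 = 0 := by
  have hsq : ((g : Matrix (Fin 2) (Fin 2) R) - 1) ^ 2 =
      (g : Matrix (Fin 2) (Fin 2) R) ^ 2 - 2 • (g : Matrix (Fin 2) (Fin 2) R) + 1 := by
    noncomm_ring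
  rw [hsq, sq_fin_two, h, g.det_coe, one_smul, two_smul, two_nsmul]
  abel

theorem eq_one_of_trace_eq_two (p : ℕ) [Fact p.Prime] [CharP R p] (g : SL(2, R))
    (ht : trace (g : Matrix (Fin 2) (Fin 2) R) = 2) (hg : g ^ (p + 1) = 1) : g = 1 := by
  have hgp : g ^ p = 1 := Subtype.ext <| by
    simpa using pow_char_eq_one_of_sub_one_sq_eq_zero p (sub_one_sq_eq_zero_of_trace_eq_two g ht)
  rwa [pow_succ, hgp, one_mul] at hg

theorem isConj_inv_of_traceless (g : SL(2, R)) {x y z : R} (hdet : -x ^ 2 - y * z = 1)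
    (h : (g 0 0 - g 1 1) * x + g 1 0 * y + g 0 1 * z = 0) : IsConj g g⁻¹ := by
  have hS : det !![x, y; z, -x] = 1 := by
    rw [det_fin_two_of]
    linear_combination hdet
  let S : SL(2, R) := ⟨!![x, y; z, -x], hS⟩
  have hSg : S * g = g⁻¹ * S := Subtype.ext <| by
    rw [coe_mul, coe_mul, coe_inv]
    exact traceless_mul_eq_adjugate_mul _ h
  exact isConj_iff.mpr ⟨S, mul_inv_eq_iff_eq_mul.mpr hSg⟩

theorem isConj_inv_of_trace_sq_ne_four {F : Type*} [Field F] [Fintype F] (hF : ringChar F ≠ 2)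
    (g : SL(2, F)) (ht : trace (g : Matrix (Fin 2) (Fin 2) F) ^ 2 ≠ 4) : IsConj g g⁻¹ := by
  have hdet := g.det_coe
  rw [det_fin_two] at hdet
  rw [trace_fin_two] at ht
  obtain ⟨x, y, z, hlin, hxyz⟩ := exists_traceless hF (e := g 0 0 - g 1 1) (b := g 0 1)
    (c := g 1 0) fun h ↦ ht (by linear_combination h + 4 * hdet)
  exact isConj_inv_of_traceless g hxyz hlin

end SpecialLinearGroup

end Matrix

theorem conj_inv_of_order_dvd_add_one (q : ℕ) [Fact (Nat.Prime q)] (hq : Odd q)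
    (g : Matrix.SpecialLinearGroup (Fin 2) (ZMod q)) (hg : orderOf g ∣ q + 1) :
    IsConj g g⁻¹ := by
  have hg1 : g ^ (q + 1) = 1 := orderOf_dvd_iff_pow_eq_one.mp hg
  by_cases ht : trace (g : Matrix (Fin 2) (Fin 2) (ZMod q)) ^ 2 = 4
  · obtain h | h := sq_eq_sq_iff_eq_or_eq_neg.mp (ht.trans (by norm_num : (4 : ZMod q) = 2 ^ 2))
    · rw [SpecialLinearGroup.eq_one_of_trace_eq_two q g h hg1, inv_one]
    · have hneg : -g = 1 := SpecialLinearGroup.eq_one_of_trace_eq_two q (-g)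
        (by rw [SpecialLinearGroup.coe_neg, trace_neg, h, neg_neg]) (by rwa [hq.add_one.neg_pow])
      rw [neg_eq_iff_eq_neg.mp hneg, inv_neg_one]
  · refine SpecialLinearGroup.isConj_inv_of_trace_sq_ne_four ?_ g ht
    rw [ZMod.ringChar_zmod_n]
    exact hq.ne_two_of_dvd_nat dvd_rfl
end

section
/- Let q be an odd prime, set c = !![1, 0; 1, 1] in SL₂(ZMod q), and let n be a natural number not divisible by q. Then c^n is conjugate to c in SL₂(ZMod q) if and only if the image of n in ZMod q is a square in ZMod q. -/
/-!
Write `u a = !![1, 0; a, 1]`, so that `c ^ n = u n`. If `g * u a = u b * g` in `SL₂` with `a ≠ 0`,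
comparing entries forces `g` to be lower triangular, and then `det g = 1` gives `b = (g 1 1) ^ 2 * a`;
conversely `diag (s⁻¹, s)` conjugates `u a` to `u (s ^ 2 * a)`. Hence for `a, b ≠ 0` the elements
`u a` and `u b` are conjugate exactly when `b / a` is a square.
-/

namespace Matrix.SpecialLinearGroup

section CommRing

variable {R : Type*} [CommRing R]

def lowerUnipotent (a : R) : SpecialLinearGroup (Fin 2) R :=
  ⟨!![1, 0; a, 1], by simp⟩

@[simp]
theorem coe_lowerUnipotent (a : R) :
    (lowerUnipotent a : Matrix (Fin 2) (Fin 2) R) = !![1, 0; a, 1] :=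
  rfl

theorem lowerUnipotent_zero : lowerUnipotent (0 : R) = 1 :=
  Subtype.ext (Matrix.one_fin_two).symm

theorem lowerUnipotent_add (a b : R) :
    lowerUnipotent (a + b) = lowerUnipotent a * lowerUnipotent b := by
  ext : 1
  simp

theorem lowerUnipotent_pow (a : R) (n : ℕ) : lowerUnipotent a ^ n = lowerUnipotent (n * a) := by
  induction n with
  | zero => simp [lowerUnipotent_zero]
  | succ k ih => rw [pow_succ, ih, ← lowerUnipotent_add, Nat.cast_succ, add_one_mul]

end CommRing

section Field

variable {K : Type*} [Field K]

theorem lowerUnipotent_semiconj_eq_sq_mul {a b : K} (ha : a ≠ 0)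
    (g : SpecialLinearGroup (Fin 2) K) (h : g * lowerUnipotent a = lowerUnipotent b * g) :
    b = (g 1 1) ^ 2 * a := by
  have hmat := congrArg Subtype.val h
  have e00 := congrFun (congrFun hmat 0) 0
  have e10 := congrFun (congrFun hmat 1) 0
  simp only [Fin.isValue, coe_mul, coe_lowerUnipotent, mul_apply, of_apply, cons_val', cons_val_zero,
    cons_val_fin_one, Fin.sum_univ_two, mul_one, cons_val_one, one_mul, zero_mul, add_zero, add_eq_left,
    mul_eq_zero] at e00 e10
  have hdet : g 0 0 * g 1 1 - g 0 1 * g 1 0 = 1 := by rw [← Matrix.det_fin_two]; exact g.prop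
  have hg01 : g 0 1 = 0 := e00.resolve_right ha
  rw [hg01] at hdet
  linear_combination -(g 1 1) * e10 - b * hdet

theorem isConj_lowerUnipotent_sq_mul (a : K) {s : K} (hs : s ≠ 0) :
    IsConj (lowerUnipotent a) (lowerUnipotent (s ^ 2 * a)) := by
  let g : SpecialLinearGroup (Fin 2) K := ⟨!![s⁻¹, 0; 0, s], by simp [hs]⟩
  refine isConj_iff.mpr ⟨g, mul_inv_eq_of_eq_mul (Subtype.ext ?_)⟩
  change !![s⁻¹, 0; 0, s] * !![1, 0; a, 1] = !![1, 0; s ^ 2 * a, 1] * !![s⁻¹, 0; 0, s]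
  simp
  field_simp

theorem isConj_lowerUnipotent_iff {a b : K} (ha : a ≠ 0) (hb : b ≠ 0) :
    IsConj (lowerUnipotent a) (lowerUnipotent b) ↔ IsSquare (b / a) := by
  constructor
  · intro h
    obtain ⟨g, hg⟩ := isConj_iff.mp h
    refine ⟨g 1 1, ?_⟩
    rw [lowerUnipotent_semiconj_eq_sq_mul ha g (eq_mul_of_mul_inv_eq hg)]
    field_simp
  · rintro ⟨s, hs⟩
    have hs0 : s ≠ 0 := by rintro rfl; simp [ha, hb] at hs
    have hb_eq : b = s ^ 2 * a := by rw [sq, ← hs]; field_simp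
    exact hb_eq ▸ isConj_lowerUnipotent_sq_mul a hs0

end Field

end Matrix.SpecialLinearGroup

open Matrix.SpecialLinearGroup in
theorem pow_conj_iff_isSquare_general (q : ℕ) [Fact (Nat.Prime q)]
    (c : Matrix.SpecialLinearGroup (Fin 2) (ZMod q))
    (hc : (c : Matrix (Fin 2) (Fin 2) (ZMod q)) = !![1, 0; 1, 1])
    (n : ℕ) (hn : ¬ q ∣ n) :
    IsConj (c ^ n) c ↔ IsSquare ((n : ZMod q)) := by
  obtain rfl : c = lowerUnipotent 1 := Subtype.ext hc
  have hn0 : (n : ZMod q) ≠ 0 := by rwa [Ne, ZMod.natCast_eq_zero_iff]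
  rw [lowerUnipotent_pow, mul_one, isConj_comm, isConj_lowerUnipotent_iff one_ne_zero hn0, div_one]

theorem pow_conj_iff_isSquare (q : ℕ) [Fact (Nat.Prime q)] (hq : Odd q)
    (c : Matrix.SpecialLinearGroup (Fin 2) (ZMod q))
    (hc : (c : Matrix (Fin 2) (Fin 2) (ZMod q)) = !![1, 0; 1, 1])
    (n : ℕ) (hn : ¬ q ∣ n) :
    IsConj (c ^ n) c ↔ IsSquare ((n : ZMod q)) :=
  pow_conj_iff_isSquare_general q c hc n hn
end
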